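/- Let G be a finite d-regular graph with random walk matrix P and spectral gap parameter λ = max_{i≥2}|λ_i(P)| < 1. For subsets S₁,...,S_k ⊆ 𝒱, the probability that a random walk started at a uniformly random vertex is in S_i at step i for all i = 1,...,k is at most ∏_{i=1}^{k-1} √(λ + (1-λ)|S_i|/|𝒱|) · √(λ + (1-λ)|S_{i+1}|/|𝒱|). -/

import Mathlib

/-
Let `Π_A` be the coordinate projection onto `A`. The walk probability is
`⟨Π_{S₁} P Π_{S₂} ⋯ P Π_{S_k} 𝟙, 𝟙⟩ / m`, so it suffices to bound `‖Π_B P y‖` for `y` supported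
on `A`. Split `y = s𝟙 + w` with `w ⟂ 𝟙`; then `P y = (1 - λ) s𝟙 + (λ s𝟙 + P w)`. The second
summand has norm at most `λ‖y‖`, and the first, projected onto `B`, has norm at most
`(1 - λ) √(|A||B|) / m · ‖y‖` by Cauchy–Schwarz. Cauchy–Schwarz in `ℝ²` turns
`λ + (1 - λ) √(ab)` into `√(λ + (1 - λ) a) · √(λ + (1 - λ) b)`.
-/

open Matrix

noncomputable def euclNorm {m : ℕ} (x : Fin m → ℝ) : ℝ :=
  Real.sqrt (∑ v, x v ^ 2)

open Finset

section EuclNorm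

variable {m : ℕ}

lemma euclNorm_nonneg (x : Fin m → ℝ) : 0 ≤ euclNorm x := Real.sqrt_nonneg _

lemma euclNorm_sq (x : Fin m → ℝ) : euclNorm x ^ 2 = ∑ v, x v ^ 2 :=
  Real.sq_sqrt (by positivity)

lemma euclNorm_eq_norm (x : Fin m → ℝ) : euclNorm x = ‖WithLp.toLp 2 x‖ := by
  simp [euclNorm, EuclideanSpace.norm_eq]

lemma euclNorm_add_le (x y : Fin m → ℝ) : euclNorm (x + y) ≤ euclNorm x + euclNorm y := by
  simpa only [euclNorm_eq_norm, WithLp.toLp_add] using norm_add_le _ _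

lemma euclNorm_indicator_le (B : Finset (Fin m)) (x : Fin m → ℝ) :
    euclNorm ((B : Set (Fin m)).indicator x) ≤ euclNorm x := by
  refine Real.sqrt_le_sqrt (sum_le_sum fun v _ => ?_)
  by_cases hv : v ∈ B <;> simp [hv, sq_nonneg]

lemma euclNorm_indicator_const (B : Finset (Fin m)) (c : ℝ) :
    euclNorm ((B : Set (Fin m)).indicator fun _ => c) = |c| * Real.sqrt #B := by
  have hsq : ∀ v, (B : Set (Fin m)).indicator (fun _ => c) v ^ 2 = if v ∈ B then c ^ 2 else 0 := by
    intro v; by_cases hv : v ∈ B <;> simp [hv]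
  rw [euclNorm, sum_congr rfl fun v _ => hsq v, sum_ite_mem, univ_inter, sum_const,
    nsmul_eq_mul, mul_comm, Real.sqrt_mul (by positivity), Real.sqrt_sq_eq_abs]

lemma euclNorm_const_add_sq {x : Fin m → ℝ} (hx : ∑ v, x v = 0) (c : ℝ) :
    euclNorm (fun v => c + x v) ^ 2 = m * c ^ 2 + euclNorm x ^ 2 := by
  simp only [euclNorm_sq, add_sq, sum_add_distrib, ← mul_sum, hx, sum_const, card_univ,
    Fintype.card_fin, nsmul_eq_mul]
  ring

lemma abs_sum_le_sqrt_card_mul_euclNorm {A : Finset (Fin m)} {y : Fin m → ℝ}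
    (hy : ∀ v ∉ A, y v = 0) : |∑ v, y v| ≤ Real.sqrt #A * euclNorm y := by
  rw [← sum_subset A.subset_univ fun v _ hv => hy v hv, euclNorm, ← Real.sqrt_mul (by positivity)]
  refine Real.abs_le_sqrt (sq_sum_le_card_mul_sum_sq.trans ?_)
  gcongr
  exact A.subset_univ

end EuclNorm

lemma add_mul_sqrt_mul_sqrt_le {lam a b : ℝ} (hlam0 : 0 ≤ lam) (hlam1 : lam ≤ 1)
    (ha : 0 ≤ a) (hb : 0 ≤ b) :
    lam + (1 - lam) * (Real.sqrt a * Real.sqrt b) ≤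
      Real.sqrt (lam + (1 - lam) * a) * Real.sqrt (lam + (1 - lam) * b) := by
  obtain ⟨p, hp, rfl⟩ : ∃ p, 0 ≤ p ∧ a = p ^ 2 := ⟨_, Real.sqrt_nonneg a, (Real.sq_sqrt ha).symm⟩
  obtain ⟨q, hq, rfl⟩ : ∃ q, 0 ≤ q ∧ b = q ^ 2 := ⟨_, Real.sqrt_nonneg b, (Real.sq_sqrt hb).symm⟩
  rw [Real.sqrt_sq hp, Real.sqrt_sq hq, ← Real.sqrt_mul (by positivity)]
  apply Real.le_sqrt_of_sq_le
  nlinarith [mul_nonneg (mul_nonneg hlam0 (sub_nonneg.2 hlam1)) (sq_nonneg (p - q))]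

lemma sum_fun_eq_sum_sum_cons {α M : Type*} [Fintype α] [AddCommMonoid M] {n : ℕ}
    (f : (Fin (n + 1) → α) → M) : ∑ t, f t = ∑ u, ∑ t, f (Fin.cons u t) := by
  rw [← (Fin.consEquiv fun _ => α).sum_comp, Fintype.sum_prod_type]
  rfl

section Walks

variable {α : Type*} (P : Matrix α α ℝ)

section

variable [DecidableEq α]

noncomputable def walkWeight {n : ℕ} (S : Fin (n + 1) → Finset α) (v : Fin (n + 1) → α) : ℝ :=
  if ∀ i, v i ∈ S i then ∏ j : Fin n, P (v j.castSucc) (v j.succ) else 0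

lemma walkWeight_cons {n : ℕ} (S : Fin (n + 2) → Finset α) (u : α) (t : Fin (n + 1) → α) :
    walkWeight P S (Fin.cons u t) =
      if u ∈ S 0 then P u (t 0) * walkWeight P (Fin.tail S) t else 0 := by
  by_cases hu : u ∈ S 0 <;>
    simp [walkWeight, hu, Fin.forall_fin_succ, Fin.prod_univ_succ, Fin.tail]

end

variable [Fintype α]

/-- `walkVec P n S = Π_{S 0} P Π_{S 1} ⋯ P Π_{S n} 𝟙`. -/
noncomputable def walkVec : (n : ℕ) → (Fin (n + 1) → Finset α) → α → ℝ
  | 0, S => (S 0 : Set α).indicator fun _ => 1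
  | n + 1, S => (S 0 : Set α).indicator (P *ᵥ walkVec n (Fin.tail S))

lemma walkVec_apply [DecidableEq α] : ∀ (n : ℕ) (S : Fin (n + 1) → Finset α) (u : α),
    walkVec P n S u = ∑ t : Fin n → α, walkWeight P S (Fin.cons u t)
  | 0, S, u => by
    by_cases hu : u ∈ S 0 <;> simp [walkVec, walkWeight, hu, Fin.forall_fin_one]
  | n + 1, S, u => by
    simp only [walkWeight_cons, walkVec, Set.indicator_apply, mem_coe, mulVec, dotProduct,
      walkVec_apply n (Fin.tail S)]
    by_cases hu : u ∈ S 0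
    · simp only [hu, if_true, mul_sum]
      rw [sum_fun_eq_sum_sum_cons]
      simp
    · simp [hu]

lemma sum_walkWeight [DecidableEq α] {n : ℕ} (S : Fin (n + 1) → Finset α) :
    ∑ v, walkWeight P S v = ∑ u, walkVec P n S u := by
  simp only [sum_fun_eq_sum_sum_cons, walkVec_apply]

lemma walkVec_eq_zero {n : ℕ} (S : Fin (n + 1) → Finset α) {u : α} (hu : u ∉ S 0) :
    walkVec P n S u = 0 := by
  cases n <;> simp [walkVec, hu]

end Walks

section Spectral

variable {m : ℕ} {P : Matrix (Fin m) (Fin m) ℝ} {lam : ℝ}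

lemma euclNorm_smul_const_add_mulVec_le (hP : 1 ᵥ* P = 1)
    (hspec : ∀ x : Fin m → ℝ, ∑ v, x v = 0 → euclNorm (P *ᵥ x) ≤ lam * euclNorm x)
    (hlam0 : 0 ≤ lam) {w : Fin m → ℝ} (hw : ∑ v, w v = 0) (s : ℝ) :
    euclNorm (fun v => lam * s + (P *ᵥ w) v) ≤ lam * euclNorm (fun v => s + w v) := by
  have hPw : ∑ v, (P *ᵥ w) v = 0 := by
    rw [← one_dotProduct, dotProduct_mulVec, hP, one_dotProduct, hw]
  have hcontract : euclNorm (P *ᵥ w) ^ 2 ≤ lam ^ 2 * euclNorm w ^ 2 := by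
    rw [← mul_pow]; exact pow_le_pow_left₀ (euclNorm_nonneg _) (hspec w hw) 2
  refine le_of_pow_le_pow_left₀ two_ne_zero (mul_nonneg hlam0 (euclNorm_nonneg _)) ?_
  rw [mul_pow, euclNorm_const_add_sq hPw, euclNorm_const_add_sq hw]
  nlinarith

lemma euclNorm_indicator_mulVec_le_add (hm : 0 < m) (hP1 : P *ᵥ 1 = 1) (hP1' : 1 ᵥ* P = 1)
    (hspec : ∀ x : Fin m → ℝ, ∑ v, x v = 0 → euclNorm (P *ᵥ x) ≤ lam * euclNorm x)
    (hlam0 : 0 ≤ lam) (hlam1 : lam ≤ 1) {A : Finset (Fin m)} (B : Finset (Fin m))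
    {y : Fin m → ℝ} (hy : ∀ v ∉ A, y v = 0) :
    euclNorm ((B : Set (Fin m)).indicator (P *ᵥ y)) ≤
      (lam + (1 - lam) * (Real.sqrt (#A / m) * Real.sqrt (#B / m))) * euclNorm y := by
  have hm' : (0 : ℝ) < m := by exact_mod_cast hm
  obtain ⟨s, hs_def⟩ : ∃ s, s = (∑ v, y v) / m := ⟨_, rfl⟩
  have hs : |s| * Real.sqrt #B ≤ Real.sqrt (#A / m) * Real.sqrt (#B / m) * euclNorm y := by
    calc |s| * Real.sqrt #B = |∑ v, y v| * Real.sqrt #B / m := by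
          rw [hs_def, abs_div, abs_of_pos hm']; ring
      _ ≤ Real.sqrt #A * euclNorm y * Real.sqrt #B / m := by
          gcongr; exact abs_sum_le_sqrt_card_mul_euclNorm hy
      _ = _ := by
          rw [Real.sqrt_div' _ hm'.le, Real.sqrt_div' _ hm'.le]
          field_simp
          rw [Real.sq_sqrt hm'.le]
  set w : Fin m → ℝ := fun v => y v - s
  have hw : ∑ v, w v = 0 := by
    simp only [w, sum_sub_distrib, sum_const, card_univ, Fintype.card_fin, nsmul_eq_mul, hs_def]
    field_simp; ring
  have hy_eq : y = fun v => s + w v := by ext v; simp only [w]; ring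
  have hPy : P *ᵥ y = fun v => s + (P *ᵥ w) v := by
    have : y = s • 1 + w := by
      ext v; simp only [w, Pi.add_apply, Pi.smul_apply, Pi.one_apply, smul_eq_mul]; ring
    rw [this, mulVec_add, mulVec_smul, hP1]; ext v; simp
  have hsplit : (B : Set (Fin m)).indicator (P *ᵥ y) = (B : Set (Fin m)).indicator
      (fun _ => (1 - lam) * s) + (B : Set (Fin m)).indicator (fun v => lam * s + (P *ᵥ w) v) := by
    rw [← Set.indicator_add', hPy]; congr 1; ext v; simp only [Pi.add_apply]; ring
  have hconst : euclNorm ((B : Set (Fin m)).indicator fun _ => (1 - lam) * s) ≤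
      (1 - lam) * (Real.sqrt (#A / m) * Real.sqrt (#B / m)) * euclNorm y := by
    rw [euclNorm_indicator_const, abs_mul, abs_of_nonneg (sub_nonneg.2 hlam1), mul_assoc,
      mul_assoc]
    exact mul_le_mul_of_nonneg_left hs (sub_nonneg.2 hlam1)
  have hrest : euclNorm ((B : Set (Fin m)).indicator fun v => lam * s + (P *ᵥ w) v) ≤
      lam * euclNorm y := by
    refine (euclNorm_indicator_le _ _).trans ?_
    rw [hy_eq]
    exact euclNorm_smul_const_add_mulVec_le hP1' hspec hlam0 hw s
  calc euclNorm ((B : Set (Fin m)).indicator (P *ᵥ y))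
      ≤ _ + _ := hsplit ▸ euclNorm_add_le _ _
    _ ≤ _ := add_le_add hconst hrest
    _ = _ := by ring

lemma euclNorm_indicator_mulVec_le (hm : 0 < m) (hP1 : P *ᵥ 1 = 1) (hP1' : 1 ᵥ* P = 1)
    (hspec : ∀ x : Fin m → ℝ, ∑ v, x v = 0 → euclNorm (P *ᵥ x) ≤ lam * euclNorm x)
    (hlam0 : 0 ≤ lam) (hlam1 : lam ≤ 1) {A : Finset (Fin m)} (B : Finset (Fin m))
    {y : Fin m → ℝ} (hy : ∀ v ∉ A, y v = 0) :
    euclNorm ((B : Set (Fin m)).indicator (P *ᵥ y)) ≤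
      Real.sqrt (lam + (1 - lam) * #A / m) * Real.sqrt (lam + (1 - lam) * #B / m) *
        euclNorm y := by
  refine (euclNorm_indicator_mulVec_le_add hm hP1 hP1' hspec hlam0 hlam1 B hy).trans ?_
  rw [mul_div_assoc, mul_div_assoc]
  exact mul_le_mul_of_nonneg_right
    (add_mul_sqrt_mul_sqrt_le hlam0 hlam1 (by positivity) (by positivity)) (euclNorm_nonneg y)

lemma euclNorm_walkVec_le (hm : 0 < m) (hP1 : P *ᵥ 1 = 1) (hP1' : 1 ᵥ* P = 1)
    (hspec : ∀ x : Fin m → ℝ, ∑ v, x v = 0 → euclNorm (P *ᵥ x) ≤ lam * euclNorm x)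
    (hlam0 : 0 ≤ lam) (hlam1 : lam ≤ 1) :
    ∀ (n : ℕ) (S : Fin (n + 1) → Finset (Fin m)), euclNorm (walkVec P n S) ≤
      (∏ j : Fin n, Real.sqrt (lam + (1 - lam) * #(S j.castSucc) / m) *
        Real.sqrt (lam + (1 - lam) * #(S j.succ) / m)) * Real.sqrt m
  | 0, S => by
    rw [walkVec, euclNorm_indicator_const, Fin.prod_univ_zero, abs_one, one_mul, one_mul]
    gcongr
    simpa using card_le_univ (S 0)
  | n + 1, S => by
    calc euclNorm (walkVec P (n + 1) S)
        ≤ Real.sqrt (lam + (1 - lam) * #(S 1) / m) * Real.sqrt (lam + (1 - lam) * #(S 0) / m) *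
            euclNorm (walkVec P n (Fin.tail S)) :=
          euclNorm_indicator_mulVec_le hm hP1 hP1' hspec hlam0 hlam1 (S 0)
            fun v hv => walkVec_eq_zero P (Fin.tail S) hv
      _ ≤ Real.sqrt (lam + (1 - lam) * #(S 1) / m) * Real.sqrt (lam + (1 - lam) * #(S 0) / m) *
            ((∏ j : Fin n, Real.sqrt (lam + (1 - lam) * #(Fin.tail S j.castSucc) / m) *
              Real.sqrt (lam + (1 - lam) * #(Fin.tail S j.succ) / m)) * Real.sqrt m) := by
          gcongr
          exact euclNorm_walkVec_le hm hP1 hP1' hspec hlam0 hlam1 n (Fin.tail S)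
      _ = _ := by
          rw [Fin.prod_univ_succ]
          simp only [Fin.tail, Fin.succ_castSucc, Fin.castSucc_zero, Fin.succ_zero_eq_one]
          ring

lemma sum_walkWeight_le (hm : 0 < m) (hP1 : P *ᵥ 1 = 1) (hP1' : 1 ᵥ* P = 1)
    (hspec : ∀ x : Fin m → ℝ, ∑ v, x v = 0 → euclNorm (P *ᵥ x) ≤ lam * euclNorm x)
    (hlam0 : 0 ≤ lam) (hlam1 : lam ≤ 1) (n : ℕ) (S : Fin (n + 1) → Finset (Fin m)) :
    1 / (m : ℝ) * ∑ v, walkWeight P S v ≤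
      ∏ j : Fin n, Real.sqrt (lam + (1 - lam) * #(S j.castSucc) / m) *
        Real.sqrt (lam + (1 - lam) * #(S j.succ) / m) := by
  have hm' : (0 : ℝ) < m := by exact_mod_cast hm
  calc 1 / (m : ℝ) * ∑ v, walkWeight P S v
      ≤ 1 / m * (Real.sqrt m * euclNorm (walkVec P n S)) := by
        rw [sum_walkWeight]
        gcongr
        simpa using (le_abs_self _).trans
          (abs_sum_le_sqrt_card_mul_euclNorm (A := univ) (y := walkVec P n S) (by simp))
    _ ≤ 1 / m * (Real.sqrt m * ((∏ j : Fin n, Real.sqrt (lam + (1 - lam) * #(S j.castSucc) / m) *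
          Real.sqrt (lam + (1 - lam) * #(S j.succ) / m)) * Real.sqrt m)) := by
        gcongr
        exact euclNorm_walkVec_le hm hP1 hP1' hspec hlam0 hlam1 n S
    _ = _ := by
        field_simp
        rw [Real.sq_sqrt hm'.le]

end Spectral

lemma mulVec_one_of_mulVec_const {ι R : Type*} [Fintype ι] [Field R] {P : Matrix ι ι R} {c : R}
    (hc : c ≠ 0) (h : P *ᵥ (fun _ => c) = fun _ => c) : P *ᵥ 1 = 1 := by
  have hc1 : (fun _ => c : ι → R) = c • 1 := by ext; simp
  rw [hc1, mulVec_smul] at h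
  exact smul_right_injective _ hc h

lemma prod_filter_val_add_one_lt {M : Type*} [CommMonoid M] {n : ℕ}
    (f : Fin (n + 1) → Fin (n + 1) → M) :
    ∏ i ∈ univ.filter (fun i : Fin (n + 1) => (i : ℕ) + 1 < n + 1), f i (i + 1) =
      ∏ j : Fin n, f j.castSucc j.succ := by
  rw [prod_filter, Fin.prod_univ_castSucc]
  simp [Fin.coeSucc_eq_succ]

theorem expander_walk_chernoff_general
    {m : ℕ} (hm : 0 < m) (P : Matrix (Fin m) (Fin m) ℝ) (lam : ℝ)
    (hsymm : P.IsSymm)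
    (he : P.mulVec (fun _ => 1 / Real.sqrt m) = fun _ => 1 / Real.sqrt m)
    (hlam0 : 0 ≤ lam) (hlam1 : lam < 1)
    (hspec : ∀ x : Fin m → ℝ, (∑ v, x v) = 0 →
      euclNorm (P.mulVec x) ≤ lam * euclNorm x)
    (k : ℕ) [NeZero k] (S : Fin k → Finset (Fin m)) :
    ∑ v ∈ Finset.univ.filter (fun v : Fin k → Fin m => ∀ i, v i ∈ S i),
        (1 / (m : ℝ)) *
          ∏ i ∈ Finset.univ.filter (fun i : Fin k => (i : ℕ) + 1 < k),
            P (v i) (v (i + 1)) ≤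
      ∏ i ∈ Finset.univ.filter (fun i : Fin k => (i : ℕ) + 1 < k),
        Real.sqrt (lam + (1 - lam) * (S i).card / m) *
          Real.sqrt (lam + (1 - lam) * (S (i + 1)).card / m) := by
  obtain ⟨n, rfl⟩ : ∃ n, k = n + 1 := ⟨k - 1, (Nat.sub_add_cancel NeZero.one_le).symm⟩
  have hP1 : P *ᵥ 1 = 1 := mulVec_one_of_mulVec_const (by positivity) he
  have hP1' : 1 ᵥ* P = 1 := by rw [← mulVec_transpose, hsymm.eq, hP1]
  rw [prod_filter_val_add_one_lt fun i j => Real.sqrt (lam + (1 - lam) * #(S i) / m) *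
    Real.sqrt (lam + (1 - lam) * #(S j) / m), ← mul_sum, sum_filter]
  refine le_of_eq_of_le ?_ (sum_walkWeight_le hm hP1 hP1' hspec hlam0 hlam1.le n S)
  congr 1
  refine sum_congr rfl fun v _ => ?_
  rw [prod_filter_val_add_one_lt fun i j => P (v i) (v j)]
  rfl

/-- Let `G` be a finite regular graph on `m` vertices with random walk matrix
`P` (symmetric, nonnegative entries, eigenvalue `1` on the uniform vector, and
all other eigenvalues at most `λ < 1` in absolute value). For subsets
`S₁,…,S_k` of the vertex set, the probability that a random walk started at a
uniformly random vertex is in `S_i` at step `i` for all `i = 1,…,k` is at most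
`∏_{i=1}^{k-1} √(λ + (1-λ)|S_i|/m) · √(λ + (1-λ)|S_{i+1}|/m)`. -/
theorem expander_walk_chernoff
    {m : ℕ} (hm : 0 < m) (P : Matrix (Fin m) (Fin m) ℝ) (lam : ℝ)
    (hsymm : P.IsSymm) (hnonneg : ∀ u v, 0 ≤ P u v)
    (he : P.mulVec (fun _ => 1 / Real.sqrt m) = fun _ => 1 / Real.sqrt m)
    (hlam0 : 0 ≤ lam) (hlam1 : lam < 1)
    (hspec : ∀ x : Fin m → ℝ, (∑ v, x v) = 0 →
      euclNorm (P.mulVec x) ≤ lam * euclNorm x)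
    (k : ℕ) [NeZero k] (S : Fin k → Finset (Fin m)) :
    ∑ v ∈ Finset.univ.filter (fun v : Fin k → Fin m => ∀ i, v i ∈ S i),
        (1 / (m : ℝ)) *
          ∏ i ∈ Finset.univ.filter (fun i : Fin k => (i : ℕ) + 1 < k),
            P (v i) (v (i + 1)) ≤
      ∏ i ∈ Finset.univ.filter (fun i : Fin k => (i : ℕ) + 1 < k),
        Real.sqrt (lam + (1 - lam) * (S i).card / m) *
          Real.sqrt (lam + (1 - lam) * (S (i + 1)).card / m) :=
  expander_walk_chernoff_general hm P lam hsymm he hlam0 hlam1 hspec k S
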